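/- arXiv:2207.09614 — 3 statements merged into one kernel-verified Lean document; each statement's English description precedes it below -/
import Mathlib

section
/- Let f : [-1,1] → ℝ be Lipschitz continuous. Define the Chebyshev coefficients a_0 = (1/π)∫_{-1}^{1} f(x)T_0(x)/√(1-x²) dx and, for k ≥ 1, a_k = (2/π)∫_{-1}^{1} f(x)T_k(x)/√(1-x²) dx, where T_k is the k-th Chebyshev polynomial of the first kind. Then ∑_{k=0}^∞ |a_k| < ∞, and the series ∑_{k=0}^∞ a_k T_k(x) converges uniformly on [-1,1] to f. -/
open Real MeasureTheory Polynomial Filter Set Complex Topology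
open scoped ENNReal NNReal

noncomputable instance fact_two_pi_pos : Fact (0 < 2*Real.pi) := ⟨by positivity⟩

lemma cos_image_Ioo : Real.cos '' Set.Ioo 0 π = Set.Ioo (-1:ℝ) 1 := by
  apply Set.eq_of_subset_of_subset
  · rintro y ⟨θ, hθ, rfl⟩
    constructor
    · have := Real.cos_lt_cos_of_nonneg_of_le_pi hθ.1.le (le_refl π) hθ.2
      simpa [Real.cos_pi] using this
    · have := Real.cos_lt_cos_of_nonneg_of_le_pi (le_refl 0) hθ.2.le hθ.1
      simpa [Real.cos_zero] using this
  · rintro y ⟨h1, h2⟩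
    exact ⟨Real.arccos y, ⟨Real.arccos_pos.2 h2,
      lt_of_le_of_ne (Real.arccos_le_pi y) (fun h => by
        have := Real.arccos_eq_pi.1 h; linarith)⟩,
      Real.cos_arccos h1.le h2.le⟩

lemma cheb_subst (f : ℝ → ℝ) (k : ℤ) :
    ∫ x in (-1:ℝ)..1, f x * (Chebyshev.T ℝ k).eval x / Real.sqrt (1 - x ^ 2)
      = ∫ θ in (0:ℝ)..π, f (Real.cos θ) * Real.cos (k * θ) := by
  have hderiv : ∀ x ∈ Set.Ioo (0:ℝ) π, HasDerivWithinAt Real.cos (-Real.sin x) (Set.Ioo 0 π) x :=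
    fun x _ => (Real.hasDerivAt_cos x).hasDerivWithinAt
  have hinj : Set.InjOn Real.cos (Set.Ioo 0 π) := Real.injOn_cos.mono Set.Ioo_subset_Icc_self
  have key := integral_image_eq_integral_abs_deriv_smul measurableSet_Ioo hderiv hinj
    (fun x => f x * (Chebyshev.T ℝ k).eval x / Real.sqrt (1 - x ^ 2))
  rw [cos_image_Ioo] at key
  rw [intervalIntegral.integral_of_le (by norm_num : (-1:ℝ) ≤ 1), integral_Ioc_eq_integral_Ioo,
    key, intervalIntegral.integral_of_le pi_nonneg, integral_Ioc_eq_integral_Ioo]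
  apply setIntegral_congr_fun measurableSet_Ioo
  intro θ hθ
  have hs : 0 < Real.sin θ := Real.sin_pos_of_pos_of_lt_pi hθ.1 hθ.2
  have hsq : Real.sqrt (1 - Real.cos θ ^ 2) = Real.sin θ := by
    rw [show 1 - Real.cos θ ^ 2 = Real.sin θ ^ 2 by nlinarith [Real.sin_sq_add_cos_sq θ]]
    exact Real.sqrt_sq hs.le
  simp only [smul_eq_mul, abs_neg, abs_of_pos hs, hsq, Polynomial.Chebyshev.T_real_cos]
  field_simp

lemma fourier_add_arg {T : ℝ} [hT : Fact (0 < T)] (n : ℤ) (x y : AddCircle T) :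
    fourier n (x + y) = fourier n x * fourier n y := by
  rw [fourier_apply, fourier_apply, fourier_apply, smul_add, AddCircle.toCircle_add]
  simp

lemma fourier_neg_arg {T : ℝ} [hT : Fact (0 < T)] (n : ℤ) (x : AddCircle T) :
    fourier n (-x) = fourier (-n) x := by
  rw [fourier_apply, fourier_apply, smul_neg, neg_smul]

lemma fourierCoeff_translate {T : ℝ} [hT : Fact (0 < T)] (g : AddCircle T → ℂ)
    (a : AddCircle T) (n : ℤ) :
    fourierCoeff (fun x => g (x + a)) n = fourier n a * fourierCoeff g n := by
  unfold fourierCoeff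
  have h1 : ∀ t : AddCircle T, fourier (-n) t • g (t + a)
      = (fun s : AddCircle T => fourier (-n) (s - a) • g s) (t + a) := by
    intro t; simp
  simp_rw [h1]
  rw [MeasureTheory.integral_add_right_eq_self
    (μ := AddCircle.haarAddCircle) (fun s : AddCircle T => fourier (-n) (s - a) • g s) a]
  have h2 : ∀ s : AddCircle T, fourier (-n) (s - a) • g s
      = (fourier n a : ℂ) • (fourier (-n) s • g s) := by
    intro s
    rw [sub_eq_add_neg, fourier_add_arg, fourier_neg_arg, neg_neg]
    simp only [smul_eq_mul]
    ring
  simp_rw [h2]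
  rw [integral_smul]
  simp

lemma parseval_bound {T : ℝ} [hT : Fact (0 < T)] (Φ : C(AddCircle T, ℂ)) {B : ℝ}
    (hB : ∀ x, ‖Φ x‖ ≤ B) :
    Summable (fun n : ℤ => ‖fourierCoeff (⇑Φ) n‖ ^ 2) ∧
      ∑' n : ℤ, ‖fourierCoeff (⇑Φ) n‖ ^ 2 ≤ B ^ 2 := by
  have hB0 : 0 ≤ B := le_trans (norm_nonneg _) (hB 0)
  set F := ContinuousMap.toLp (E := ℂ) 2 AddCircle.haarAddCircle ℂ Φ with hF
  have hcoeff : ∀ n : ℤ, fourierCoeff (⇑F) n = fourierCoeff (⇑Φ) n := fourierCoeff_toLp Φ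
  have hsum : Summable (fun n : ℤ => ‖fourierCoeff (⇑Φ) n‖ ^ 2) := by
    have hmem := lp.memℓp (fourierBasis.repr F)
    rw [memℓp_gen_iff (by norm_num : 0 < (2 : ℝ≥0∞).toReal)] at hmem
    apply hmem.congr
    intro n
    rw [fourierBasis_repr, hcoeff n]
    norm_num
  have hpars := tsum_sq_fourierCoeff F
  have hint : ∫ t : AddCircle T, ‖F t‖ ^ 2 ∂AddCircle.haarAddCircle ≤ B ^ 2 := by
    have hae : ∀ᵐ t ∂(AddCircle.haarAddCircle : Measure (AddCircle T)), ‖F t‖ ^ 2 = ‖Φ t‖ ^ 2 := by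
      filter_upwards [ContinuousMap.coeFn_toLp (p := 2) (μ := AddCircle.haarAddCircle) (𝕜 := ℂ) Φ]
        with t ht
      rw [ht]
    rw [integral_congr_ae hae]
    have hbd : ∀ᵐ t ∂(AddCircle.haarAddCircle : Measure (AddCircle T)), ‖‖Φ t‖ ^ 2‖ ≤ B ^ 2 := by
      filter_upwards with t
      rw [Real.norm_eq_abs, _root_.abs_of_nonneg (by positivity : (0:ℝ) ≤ ‖Φ t‖ ^ 2)]
      exact pow_le_pow_left₀ (norm_nonneg _) (hB t) 2
    calc ∫ t : AddCircle T, ‖Φ t‖ ^ 2 ∂AddCircle.haarAddCircle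
        ≤ ‖∫ t : AddCircle T, ‖Φ t‖ ^ 2 ∂AddCircle.haarAddCircle‖ := le_abs_self _
      _ ≤ B ^ 2 * ((AddCircle.haarAddCircle : Measure (AddCircle T)) univ).toReal :=
          norm_integral_le_of_norm_le_const hbd
      _ = B ^ 2 := by simp
  refine ⟨hsum, ?_⟩
  have heq : ∑' n : ℤ, ‖fourierCoeff (⇑Φ) n‖ ^ 2 = ∑' i : ℤ, ‖fourierCoeff (⇑F) i‖ ^ 2 :=
    tsum_congr fun n => by rw [hcoeff n]
  rw [heq, hpars]
  exact hint

lemma integrable_continuous_circle {T : ℝ} [hT : Fact (0 < T)] (g : AddCircle T → ℂ)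
    (hg : Continuous g) : Integrable g (AddCircle.haarAddCircle) :=
  hg.integrable_of_hasCompactSupport
    (IsCompact.of_isClosed_subset isCompact_univ (isClosed_tsupport g) (subset_univ _))

lemma le_of_sq_le_sq'' {A B : ℝ} (hB : 0 ≤ B) (h : A^2 ≤ B^2) : A ≤ B := by nlinarith

set_option maxHeartbeats 1000000 in
lemma bernstein_key (G : C(AddCircle (2*π), ℂ)) (C : ℝ)
    (hlip : ∀ (h : ℝ) (x : AddCircle (2*π)),
      ‖G (x + (h : ℝ)) - G (x - (h : ℝ))‖ ≤ 2*C*|Real.sin h|)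
    (h : ℝ) (s : Finset ℤ) :
    ∑ n ∈ s, Real.sin (n*h)^2 * ‖fourierCoeff (⇑G) n‖^2 ≤ C^2 * Real.sin h^2 := by
  set c : ℤ → ℂ := fourierCoeff (⇑G) with hc
  set Φ : C(AddCircle (2*π), ℂ) :=
    ⟨fun x => G (x + (h:ℝ)) - G (x - (h:ℝ)), by
      exact (G.continuous.comp (continuous_id.add continuous_const)).sub
        (G.continuous.comp (continuous_id.sub continuous_const))⟩ with hΦ
  have hcoeff : ∀ n : ℤ, fourierCoeff (⇑Φ) n
      = (fourier n ((h:ℝ) : AddCircle (2*π)) - fourier (-n) ((h:ℝ) : AddCircle (2*π))) * c n := by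
    intro n
    have hsub : (⇑Φ : AddCircle (2*π) → ℂ)
        = (fun x => G (x + (h:ℝ))) - (fun x => G (x + ((-h:ℝ) : ℝ))) := by
      funext x
      have hx : x - ((h:ℝ) : AddCircle (2*π)) = x + ((-h:ℝ) : AddCircle (2*π)) := by
        rw [sub_eq_add_neg]
        norm_cast
      simp only [hΦ, ContinuousMap.coe_mk, Pi.sub_apply, hx]
    rw [hsub]
    have hint : ∀ a : AddCircle (2*π), Integrable
        (fun x : AddCircle (2*π) => fourier (-n) x • G (x + a)) AddCircle.haarAddCircle :=
      fun a => integrable_continuous_circle _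
        ((fourier (-n)).continuous.smul (G.continuous.comp (continuous_id.add continuous_const)))
    have hsplit : fourierCoeff ((fun x : AddCircle (2*π) => G (x + ((h:ℝ):AddCircle (2*π))))
          - fun x => G (x + (((-h:ℝ)):AddCircle (2*π)))) n
        = fourierCoeff (fun x : AddCircle (2*π) => G (x + ((h:ℝ):AddCircle (2*π)))) n
          - fourierCoeff (fun x : AddCircle (2*π) => G (x + (((-h:ℝ)):AddCircle (2*π)))) n := by
      unfold fourierCoeff
      simp only [Pi.sub_apply, smul_sub]
      exact integral_sub (hint _) (hint _)
    rw [hsplit, fourierCoeff_translate, fourierCoeff_translate]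
    have hneg : (((-h:ℝ)) : AddCircle (2*π)) = -((h:ℝ) : AddCircle (2*π)) := by norm_cast
    rw [hneg, fourier_neg_arg]
    ring
  have hnorm : ∀ n : ℤ, ‖fourierCoeff (⇑Φ) n‖^2 = 4 * (Real.sin (n*h)^2 * ‖c n‖^2) := by
    intro n
    rw [hcoeff n, norm_mul, mul_pow]
    have hf : ∀ m : ℤ, fourier m ((h:ℝ) : AddCircle (2*π)) = Complex.exp ((m*h : ℝ) * Complex.I) := by
      intro m
      rw [fourier_coe_apply]
      congr 1
      push_cast
      have hπ : (π:ℂ) ≠ 0 := by exact_mod_cast Real.pi_ne_zero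
      field_simp
    have h2 : fourier n ((h:ℝ) : AddCircle (2*π)) - fourier (-n) ((h:ℝ) : AddCircle (2*π))
        = 2 * Complex.I * Complex.sin ((n*h : ℝ) : ℂ) := by
      rw [hf n, hf (-n), Complex.sin]
      push_cast
      ring_nf
      rw [Complex.I_sq]
      ring
    have h4 : (2 : ℂ) * Complex.I * Complex.sin ((n*h : ℝ) : ℂ)
        = 2 * Complex.I * ((Real.sin ((n:ℝ)*h) : ℝ) : ℂ) := by
      rw [Complex.ofReal_sin]
    rw [h2, h4]
    have h3 : ‖(2:ℂ) * Complex.I * ((Real.sin ((n:ℝ)*h) : ℝ) : ℂ)‖ = 2 * |Real.sin ((n:ℝ)*h)| := by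
      rw [norm_mul, norm_mul, Complex.norm_I, Complex.norm_real, Real.norm_eq_abs]
      norm_num
    rw [h3, mul_pow, _root_.sq_abs]
    ring
  have hB : ∀ x, ‖Φ x‖ ≤ 2*C*|Real.sin h| := fun x => hlip h x
  obtain ⟨hsum, htsum⟩ := parseval_bound Φ hB
  have h1 : ∑ n ∈ s, ‖fourierCoeff (⇑Φ) n‖^2 ≤ (2*C*|Real.sin h|)^2 :=
    le_trans (Summable.sum_le_tsum s (fun n _ => by positivity) hsum) htsum
  have h2 : ∑ n ∈ s, ‖fourierCoeff (⇑Φ) n‖^2 = 4 * ∑ n ∈ s, Real.sin (n*h)^2 * ‖c n‖^2 := by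
    rw [Finset.mul_sum]
    exact Finset.sum_congr rfl (fun n _ => hnorm n)
  rw [h2] at h1
  have h3 : (2*C*|Real.sin h|)^2 = 4 * (C^2 * Real.sin h^2) := by
    rw [mul_pow, mul_pow, _root_.sq_abs]; ring
  rw [h3] at h1
  linarith

set_option maxHeartbeats 1000000 in
lemma bernstein_block (G : C(AddCircle (2*π), ℂ)) (C : ℝ) (hC : 0 ≤ C)
    (hlip : ∀ (h : ℝ) (x : AddCircle (2*π)),
      ‖G (x + (h : ℝ)) - G (x - (h : ℝ))‖ ≤ 2*C*|Real.sin h|)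
    (m : ℕ) :
    ∑ j ∈ Finset.Ico (2^m : ℕ) (2^(m+1) : ℕ), ‖fourierCoeff (⇑G) (j:ℤ)‖
      ≤ C * π * (Real.sqrt 2/2)^m := by
  set c : ℤ → ℂ := fourierCoeff (⇑G) with hc
  set r : ℝ := Real.sqrt 2 / 2 with hr
  have hrsq : r^2 = 1/2 := by
    rw [hr, div_pow, Real.sq_sqrt (by norm_num : (0:ℝ) ≤ 2)]
    norm_num
  set X : ℝ := (2:ℝ)^m with hX
  have hX0 : 0 < X := by positivity
  have hX1 : (1:ℝ) ≤ X := one_le_pow₀ (by norm_num)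
  set h : ℝ := π / (X*4) with hh
  have hh0 : 0 < h := by positivity
  have hhpi2 : h ≤ π/2 := by
    rw [hh, div_le_div_iff₀ (by positivity) (by norm_num)]
    nlinarith [Real.pi_pos]
  have hsin : ∀ j ∈ Finset.Ico (2^m : ℕ) (2^(m+1) : ℕ), (1/2:ℝ) ≤ Real.sin ((j:ℝ)*h)^2 := by
    intro j hj
    rw [Finset.mem_Ico] at hj
    have hj1 : X ≤ (j:ℝ) := by rw [hX]; exact_mod_cast hj.1
    have hj2 : (j:ℝ) ≤ X*2 := by
      rw [hX, show (2:ℝ)^m*2 = 2^(m+1) by rw [pow_succ]]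
      exact_mod_cast hj.2.le
    have hXh : X * h = π/4 := by rw [hh]; field_simp
    have hX2h : (X*2) * h = π/2 := by rw [hh]; field_simp; ring
    have hlo : π/4 ≤ (j:ℝ)*h := by
      calc π/4 = X*h := hXh.symm
        _ ≤ (j:ℝ)*h := mul_le_mul_of_nonneg_right hj1 hh0.le
    have hhi : (j:ℝ)*h ≤ π/2 := by
      calc (j:ℝ)*h ≤ (X*2)*h := mul_le_mul_of_nonneg_right hj2 hh0.le
        _ = π/2 := hX2h
    have hmono : Real.sin (π/4) ≤ Real.sin ((j:ℝ)*h) :=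
      Real.sin_le_sin_of_le_of_le_pi_div_two (by linarith [Real.pi_pos]) hhi hlo
    rw [Real.sin_pi_div_four] at hmono
    nlinarith [Real.sq_sqrt (by norm_num : (0:ℝ) ≤ 2), Real.sqrt_nonneg 2]
  have hsq : ∑ j ∈ Finset.Ico (2^m : ℕ) (2^(m+1) : ℕ), ‖c (j:ℤ)‖^2 ≤ 2*(C^2*h^2) := by
    have himg := bernstein_key G C hlip h ((Finset.Ico (2^m : ℕ) (2^(m+1) : ℕ)).image (fun j : ℕ => (j:ℤ)))
    rw [Finset.sum_image (by intro a _ b _ hab; exact Nat.cast_injective hab)] at himg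
    have hstep : (1/2:ℝ) * ∑ j ∈ Finset.Ico (2^m : ℕ) (2^(m+1) : ℕ), ‖c (j:ℤ)‖^2
        ≤ ∑ j ∈ Finset.Ico (2^m : ℕ) (2^(m+1) : ℕ), Real.sin (((j:ℤ):ℝ)*h)^2 * ‖c (j:ℤ)‖^2 := by
      rw [Finset.mul_sum]
      apply Finset.sum_le_sum
      intro j hj
      have h1 := hsin j hj
      have hnn : (0:ℝ) ≤ ‖c (j:ℤ)‖^2 := by positivity
      push_cast at h1 ⊢
      nlinarith
    have hsinh : Real.sin h^2 ≤ h^2 := by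
      have h1 : 0 ≤ Real.sin h := Real.sin_nonneg_of_nonneg_of_le_pi hh0.le
        (by linarith [Real.pi_pos])
      have h2 : Real.sin h ≤ h := Real.sin_le hh0.le
      nlinarith
    have hCsin : C^2 * Real.sin h^2 ≤ C^2 * h^2 := by nlinarith
    linarith [le_trans himg hCsin]
  have hcard : ((Finset.Ico (2^m : ℕ) (2^(m+1) : ℕ)).card : ℝ) = X := by
    rw [Nat.card_Ico]
    have h1 : 2^(m+1) - 2^m = 2^m := by rw [pow_succ]; omega
    rw [h1, hX]
    push_cast
    ring
  have cs := sq_sum_le_card_mul_sum_sq (s := Finset.Ico (2^m : ℕ) (2^(m+1) : ℕ))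
    (f := fun j : ℕ => ‖c (j:ℤ)‖)
  apply le_of_sq_le_sq'' (by positivity)
  have hrm : (C*π*r^m)^2 = C^2*π^2*(1/X) := by
    rw [mul_pow, mul_pow, ← pow_mul, mul_comm m 2, pow_mul, hrsq, div_pow, one_pow, hX]
    try ring
  rw [hrm]
  calc (∑ j ∈ Finset.Ico (2^m : ℕ) (2^(m+1) : ℕ), ‖c (j:ℤ)‖)^2
      ≤ ((Finset.Ico (2^m : ℕ) (2^(m+1) : ℕ)).card : ℝ)
        * ∑ j ∈ Finset.Ico (2^m : ℕ) (2^(m+1) : ℕ), ‖c (j:ℤ)‖^2 := by exact_mod_cast cs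
    _ ≤ X * (2*(C^2*h^2)) := by
        rw [hcard]
        exact mul_le_mul_of_nonneg_left hsq hX0.le
    _ = C^2*π^2/(8*X) := by rw [hh]; field_simp; try ring
    _ ≤ C^2*π^2*(1/X) := by
        have h8 : C^2*π^2*(1/X)*(8*X) = 8*(C^2*π^2) := by field_simp <;> ring
        rw [div_le_iff₀ (by positivity)]
        calc C^2*π^2 ≤ 8*(C^2*π^2) := by nlinarith [sq_nonneg (C*π)]
          _ = C^2*π^2*(1/X)*(8*X) := h8.symm

set_option maxHeartbeats 1000000 in
lemma bernstein_summable (G : C(AddCircle (2*π), ℂ)) (C : ℝ)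
    (hlip : ∀ (h : ℝ) (x : AddCircle (2*π)),
      ‖G (x + (h : ℝ)) - G (x - (h : ℝ))‖ ≤ 2*C*|Real.sin h|)
    (heven : ∀ n : ℤ, fourierCoeff (⇑G) (-n) = fourierCoeff (⇑G) n) :
    Summable (fun n : ℤ => ‖fourierCoeff (⇑G) n‖) := by
  set c : ℤ → ℂ := fourierCoeff (⇑G) with hc
  have hC : 0 ≤ C := by
    have := hlip (π/2) 0
    have h1 : (0:ℝ) ≤ 2*C*|Real.sin (π/2)| := le_trans (norm_nonneg _) this
    rw [Real.sin_pi_div_two] at h1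
    simpa using h1
  set r : ℝ := Real.sqrt 2 / 2 with hr
  have hr0 : 0 ≤ r := by positivity
  have hr1 : r < 1 := by
    have h4 : Real.sqrt 2 < 2 := by
      nlinarith [Real.sq_sqrt (by norm_num : (0:ℝ) ≤ 2), Real.sqrt_nonneg 2]
    rw [hr]
    linarith
  have block := bernstein_block G C hC hlip
  have hIco : ∀ M : ℕ, ∑ j ∈ Finset.Ico (1:ℕ) (2^M), ‖c (j:ℤ)‖ ≤ ∑ m ∈ Finset.range M, C*π*r^m := by
    intro M
    induction M with
    | zero => simp
    | succ M ih =>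
        have h1 : (1:ℕ) ≤ 2^M := Nat.one_le_two_pow
        have h2 : (2:ℕ)^M ≤ 2^(M+1) := Nat.pow_le_pow_right (by norm_num) (Nat.le_succ M)
        rw [Finset.sum_range_succ, ← Finset.sum_Ico_consecutive (fun j : ℕ => ‖c (j:ℤ)‖) h1 h2]
        exact add_le_add ih (block M)
  have hgeom : ∀ N : ℕ, ∑ m ∈ Finset.range N, C*π*r^m ≤ C*π*(1-r)⁻¹ := by
    intro N
    rw [← Finset.mul_sum]
    apply mul_le_mul_of_nonneg_left _ (by positivity)
    calc ∑ m ∈ Finset.range N, r^m ≤ ∑' m : ℕ, r^m :=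
          Summable.sum_le_tsum _ (fun m _ => by positivity) (summable_geometric_of_lt_one hr0 hr1)
      _ = (1-r)⁻¹ := tsum_geometric_of_lt_one hr0 hr1
  have hnat : Summable (fun j : ℕ => ‖c (j:ℤ)‖) := by
    apply summable_of_sum_range_le (c := ‖c 0‖ + C*π*(1-r)⁻¹) (fun n => norm_nonneg _)
    intro N
    calc ∑ j ∈ Finset.range N, ‖c (j:ℤ)‖
        ≤ ∑ j ∈ Finset.range (2^N), ‖c (j:ℤ)‖ := by
          apply Finset.sum_le_sum_of_subset_of_nonneg
            (Finset.range_subset_range.2 (Nat.lt_two_pow_self (n := N)).le)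
          intros; positivity
      _ = ‖c 0‖ + ∑ j ∈ Finset.Ico (1:ℕ) (2^N), ‖c (j:ℤ)‖ := by
          rw [Finset.range_eq_Ico, Finset.sum_eq_sum_Ico_succ_bot (by positivity)]
          norm_num
      _ ≤ ‖c 0‖ + ∑ m ∈ Finset.range N, C*π*r^m := add_le_add_right (hIco N) _
      _ ≤ ‖c 0‖ + C*π*(1-r)⁻¹ := add_le_add_right (hgeom N) _
  apply Summable.of_nat_of_neg_add_one hnat
  apply Summable.congr ((summable_nat_add_iff 1).2 hnat)
  intro j
  rw [show (-(((j:ℕ):ℤ)+1)) = -(((j+1:ℕ)):ℤ) by push_cast; ring, heven]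

lemma fourier_two_pi (m : ℤ) (θ : ℝ) :
    fourier m ((θ : ℝ) : AddCircle (2*Real.pi)) = Complex.exp ((m*θ : ℝ) * Complex.I) := by
  rw [fourier_coe_apply]
  congr 1
  push_cast
  have hπ : (π:ℂ) ≠ 0 := by exact_mod_cast Real.pi_ne_zero
  field_simp
  try ring

lemma even_interval (g : ℝ → ℝ) (hcont : Continuous g) (hev : ∀ θ, g (-θ) = g θ) :
    ∫ θ in -π..π, g θ = 2 * ∫ θ in (0:ℝ)..π, g θ := by
  have h1 : ∫ θ in -π..(0:ℝ), g θ = ∫ θ in (0:ℝ)..π, g θ := by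
    have h2 := intervalIntegral.integral_comp_neg (a := 0) (b := π) (f := g)
    rw [neg_zero] at h2
    rw [← h2]
    apply intervalIntegral.integral_congr
    intro θ _
    exact hev θ
  rw [← intervalIntegral.integral_add_adjacent_intervals (a := -π) (b := 0) (c := π)
    (hcont.intervalIntegrable _ _) (hcont.intervalIntegrable _ _), h1]
  ring

set_option maxHeartbeats 2000000 in
/-- **Chebyshev series of a Lipschitz function.**
If `f` is Lipschitz continuous on `[-1,1]` and `a k` are its Chebyshev coefficients,
then `∑ |a k| < ∞` and the Chebyshev series converges uniformly on `[-1,1]` to `f`. -/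
theorem chebyshev_series_of_lipschitz
    (f : ℝ → ℝ) (C : ℝ)
    (hf : ∀ x ∈ Set.Icc (-1 : ℝ) 1, ∀ y ∈ Set.Icc (-1 : ℝ) 1,
      |f x - f y| ≤ C * |x - y|)
    (a : ℕ → ℝ)
    (ha0 : a 0 = (1 / π) *
      ∫ x in (-1 : ℝ)..1, f x * (Chebyshev.T ℝ 0).eval x / Real.sqrt (1 - x ^ 2))
    (hak : ∀ k : ℕ, 1 ≤ k → a k = (2 / π) *
      ∫ x in (-1 : ℝ)..1, f x * (Chebyshev.T ℝ (k : ℤ)).eval x / Real.sqrt (1 - x ^ 2)) :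
    Summable (fun k : ℕ => |a k|) ∧
      TendstoUniformlyOn
        (fun n : ℕ => fun x : ℝ => ∑ k ∈ Finset.range n, a k * (Chebyshev.T ℝ (k : ℤ)).eval x)
        f atTop (Set.Icc (-1 : ℝ) 1) := by
  have hπ : (0:ℝ) < π := Real.pi_pos
  have hC : 0 ≤ C := by
    have h2 := hf 1 (by norm_num) (-1) (by norm_num)
    have h0 : (0:ℝ) ≤ |f 1 - f (-1)| := abs_nonneg _
    have h1 : |(1:ℝ) - (-1)| = 2 := by norm_num
    nlinarith
  -- continuity of f ∘ cos
  have hfcont : ContinuousOn f (Set.Icc (-1:ℝ) 1) := by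
    apply LipschitzOnWith.continuousOn (K := C.toNNReal)
    apply LipschitzOnWith.of_dist_le_mul
    intro x hx y hy
    rw [Real.dist_eq, Real.dist_eq]
    calc |f x - f y| ≤ C * |x - y| := hf x hx y hy
      _ ≤ (C.toNNReal : ℝ) * |x - y| :=
          mul_le_mul_of_nonneg_right (Real.le_coe_toNNReal C) (abs_nonneg _)
  have hfcos : Continuous (fun θ : ℝ => f (Real.cos θ)) :=
    hfcont.comp_continuous Real.continuous_cos
      (fun θ => ⟨Real.neg_one_le_cos θ, Real.cos_le_one θ⟩)
  set fc : ℝ → ℂ := fun θ => ((f (Real.cos θ) : ℝ) : ℂ) with hfc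
  have hfcC : Continuous fc := Complex.continuous_ofReal.comp hfcos
  have hper : Function.Periodic fc (2*π) := by
    intro θ
    simp only [hfc]
    rw [Real.cos_add_two_pi]
  -- lift to the circle
  set G : C(AddCircle (2*π), ℂ) :=
    ⟨AddCircle.liftIco (2*π) (-π) fc, AddCircle.liftIco_continuous
      (by rw [show -π + 2*π = π by ring]; simp only [hfc]; rw [Real.cos_neg])
      (hfcC.continuousOn)⟩ with hGdef
  have hG : ∀ θ : ℝ, G ((θ : ℝ) : AddCircle (2*π)) = fc θ := by
    intro θ
    have h2π : (0:ℝ) < 2*π := by positivity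
    have hmem := toIcoMod_mem_Ico h2π (-π) θ
    have hcoe : ((toIcoMod h2π (-π) θ : ℝ) : AddCircle (2*π)) = ((θ:ℝ) : AddCircle (2*π)) := by
      rw [toIcoMod, QuotientAddGroup.mk_sub, QuotientAddGroup.mk_zsmul, AddCircle.coe_period,
        smul_zero, sub_zero]
    calc G ((θ:ℝ) : AddCircle (2*π)) = G ((toIcoMod h2π (-π) θ : ℝ) : AddCircle (2*π)) := by
          rw [hcoe]
      _ = fc (toIcoMod h2π (-π) θ) := by
          simp only [hGdef, ContinuousMap.coe_mk]
          exact AddCircle.liftIco_coe_apply hmem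
      _ = fc θ := by rw [toIcoMod]; exact hper.sub_zsmul_eq _
  -- Fourier coefficients as interval integrals
  set c : ℤ → ℂ := fourierCoeff (⇑G) with hcdef
  have cInt : ∀ n : ℤ, c n = (1/(2*π) : ℝ) •
      ∫ θ in (-π)..π, Complex.exp ((((-n : ℤ) : ℝ)*θ : ℝ) * Complex.I) * fc θ := by
    intro n
    have h1 := fourierCoeff_eq_intervalIntegral (⇑G) n (-π)
    rw [show -π + 2*π = π by ring] at h1
    rw [hcdef, h1]
    congr 1
    apply intervalIntegral.integral_congr
    intro θ _
    simp only [hG, fourier_two_pi, smul_eq_mul]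
  -- evenness of the coefficients
  have heven : ∀ n : ℤ, c (-n) = c n := by
    intro n
    rw [cInt n, cInt (-n)]
    congr 1
    have h2 := intervalIntegral.integral_comp_neg (a := -π) (b := π)
      (f := fun θ => Complex.exp ((((-n : ℤ) : ℝ)*θ : ℝ) * Complex.I) * fc θ)
    rw [neg_neg] at h2
    rw [← h2]
    apply intervalIntegral.integral_congr
    intro θ _
    have hfceven : fc (-θ) = fc θ := by simp only [hfc]; rw [Real.cos_neg]
    simp only
    rw [hfceven]
    congr 2
    push_cast
    ring
  -- the cosine-coefficient identity
  set Ik : ℤ → ℝ := fun k => ∫ θ in (0:ℝ)..π, f (Real.cos θ) * Real.cos ((k:ℝ)*θ) with hIk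
  have hcont1 : ∀ m : ℤ, Continuous (fun θ : ℝ =>
      Complex.exp (((m : ℝ)*θ : ℝ) * Complex.I) * fc θ) := by
    intro m
    apply Continuous.mul _ hfcC
    apply Complex.continuous_exp.comp
    exact (Complex.continuous_ofReal.comp (continuous_const.mul continuous_id)).mul
      continuous_const
  have hgcont : ∀ k : ℤ, Continuous (fun θ : ℝ => 2*(f (Real.cos θ) * Real.cos ((k:ℝ)*θ))) := by
    intro k
    exact continuous_const.mul (hfcos.mul
      (Real.continuous_cos.comp (continuous_const.mul continuous_id)))
  have claimA : ∀ k : ℤ, c k + c (-k) = ((2/π * Ik k : ℝ) : ℂ) := by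
    intro k
    rw [cInt k, cInt (-k), neg_neg, ← smul_add,
      ← intervalIntegral.integral_add ((hcont1 (-k)).intervalIntegrable _ _)
        ((hcont1 k).intervalIntegrable _ _)]
    have hpt : ∀ θ ∈ Set.uIcc (-π) π, (fun θ : ℝ =>
        Complex.exp ((((-k : ℤ) : ℝ)*θ : ℝ) * Complex.I) * fc θ
          + Complex.exp ((((k : ℤ) : ℝ)*θ : ℝ) * Complex.I) * fc θ) θ
        = (fun θ : ℝ => ((2*(f (Real.cos θ) * Real.cos ((k:ℝ)*θ)) : ℝ) : ℂ)) θ := by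
      intro θ _
      simp only
      have e1 : Complex.exp ((((-k : ℤ) : ℝ)*θ : ℝ) * Complex.I)
          = Complex.exp (-((((k:ℝ)*θ : ℝ) : ℂ) * Complex.I)) := by
        congr 1 <;> push_cast <;> try ring
      have e2 : Complex.exp ((((k : ℤ) : ℝ)*θ : ℝ) * Complex.I)
          = Complex.exp ((((k:ℝ)*θ : ℝ) : ℂ) * Complex.I) := by
        congr 1 <;> push_cast <;> try ring
      rw [e1, e2]
      simp only [hfc]
      push_cast
      rw [Complex.cos]
      ring_nf
    rw [intervalIntegral.integral_congr hpt]
    rw [intervalIntegral.integral_ofReal]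
    have hev2 : ∀ θ : ℝ, 2*(f (Real.cos (-θ)) * Real.cos ((k:ℝ)*(-θ)))
        = 2*(f (Real.cos θ) * Real.cos ((k:ℝ)*θ)) := by
      intro θ
      rw [Real.cos_neg, show (k:ℝ)*(-θ) = -((k:ℝ)*θ) by ring, Real.cos_neg]
    rw [even_interval _ (hgcont k) hev2]
    rw [intervalIntegral.integral_const_mul]
    rw [Complex.real_smul, ← Complex.ofReal_mul]
    norm_cast
    simp only [hIk]
    field_simp
  have hck : ∀ k : ℤ, c k = ((1/π * Ik k : ℝ) : ℂ) := by
    intro k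
    have h1 := claimA k
    rw [heven k] at h1
    have h3 : ((2/π * Ik k : ℝ) : ℂ) = 2 * ((1/π * Ik k : ℝ) : ℂ) := by
      push_cast
      ring
    rw [h3] at h1
    have h2 : (2:ℂ) * c k = 2 * ((1/π * Ik k : ℝ) : ℂ) := by rw [← h1]; ring
    exact mul_left_cancel₀ (by norm_num : (2:ℂ) ≠ 0) h2
  -- Lipschitz-type bound for the circle function
  have hlip : ∀ (h : ℝ) (x : AddCircle (2*π)),
      ‖G (x + (h : ℝ)) - G (x - (h : ℝ))‖ ≤ 2*C*|Real.sin h| := by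
    intro h x
    obtain ⟨θ, rfl⟩ := QuotientAddGroup.mk_surjective x
    have h1 : (QuotientAddGroup.mk θ : AddCircle (2*π)) + ((h:ℝ) : AddCircle (2*π))
        = ((θ + h : ℝ) : AddCircle (2*π)) := by norm_cast
    have h2 : (QuotientAddGroup.mk θ : AddCircle (2*π)) - ((h:ℝ) : AddCircle (2*π))
        = ((θ - h : ℝ) : AddCircle (2*π)) := by norm_cast
    rw [h1, h2, hG, hG]
    have h3 : fc (θ+h) - fc (θ-h) = ((f (Real.cos (θ+h)) - f (Real.cos (θ-h)) : ℝ) : ℂ) := by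
      simp only [hfc]
      push_cast
      ring
    rw [h3, Complex.norm_real, Real.norm_eq_abs]
    have hb := hf (Real.cos (θ+h)) ⟨Real.neg_one_le_cos _, Real.cos_le_one _⟩
      (Real.cos (θ-h)) ⟨Real.neg_one_le_cos _, Real.cos_le_one _⟩
    have hcos : Real.cos (θ+h) - Real.cos (θ-h) = (-2 * Real.sin θ) * Real.sin h := by
      rw [Real.cos_add, Real.cos_sub]
      ring
    have habs : |Real.cos (θ+h) - Real.cos (θ-h)| = (2*|Real.sin θ|)*|Real.sin h| := by
      rw [hcos, abs_mul, abs_mul, abs_neg, _root_.abs_two]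
    have hsθ : |Real.sin θ| ≤ 1 := abs_le.2 ⟨Real.neg_one_le_sin θ, Real.sin_le_one θ⟩
    calc |f (Real.cos (θ+h)) - f (Real.cos (θ-h))|
        ≤ C * |Real.cos (θ+h) - Real.cos (θ-h)| := hb
      _ = C * ((2*|Real.sin θ|)*|Real.sin h|) := by rw [habs]
      _ ≤ C * ((2*1)*|Real.sin h|) := by
          apply mul_le_mul_of_nonneg_left _ hC
          apply mul_le_mul_of_nonneg_right _ (abs_nonneg _)
          nlinarith
      _ = 2*C*|Real.sin h| := by ring
  -- summability
  have hsumZ : Summable (fun n : ℤ => ‖c n‖) := bernstein_summable G C hlip heven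
  have hsumN : Summable (fun k : ℕ => ‖c (k:ℤ)‖) :=
    hsumZ.comp_injective (fun p q hpq => by exact_mod_cast hpq)
  have hnormc : ∀ k : ℤ, ‖c k‖ = |1/π * Ik k| := by
    intro k
    rw [hck k]
    rw [Complex.norm_real]
    try rw [Real.norm_eq_abs]
  have ha0' : a 0 = 1/π * Ik 0 := by
    rw [ha0, cheb_subst f 0, hIk]
    try norm_num
  have hak' : ∀ k : ℕ, 1 ≤ k → a k = 2/π * Ik k := by
    intro k hk
    rw [hak k hk, cheb_subst f k, hIk]
  have hakb : ∀ k : ℕ, |a k| ≤ 2*‖c (k:ℤ)‖ := by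
    intro k
    rcases Nat.eq_zero_or_pos k with hk | hk
    · subst hk
      rw [ha0']
      rw [show ((0:ℕ):ℤ) = 0 from rfl, hnormc 0]
      nlinarith [abs_nonneg (1/π * Ik 0)]
    · rw [hak' k hk, hnormc k]
      rw [show (2/π) * Ik k = 2*((1/π)*Ik k) by ring, abs_mul, _root_.abs_two]
  have part1 : Summable fun k : ℕ => |a k| :=
    Summable.of_nonneg_of_le (fun k => abs_nonneg _) hakb (hsumN.mul_left 2)
  refine ⟨part1, ?_⟩
  -- uniform convergence
  have hsumC : Summable (fourierCoeff (⇑G)) := hsumZ.of_norm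
  have hHasSum := hasSum_fourier_series_of_summable hsumC
  set J : ℕ → Finset ℤ := fun n => Finset.Ioo (-(n:ℤ)) (n:ℤ) with hJ
  have hJmono : Monotone J := by
    intro p q hpq
    apply Finset.Ioo_subset_Ioo
    · exact neg_le_neg (by exact_mod_cast hpq)
    · exact_mod_cast hpq
  have hJcover : ∀ i : ℤ, ∃ n : ℕ, i ∈ J n := by
    intro i
    refine ⟨i.natAbs + 1, ?_⟩
    simp only [hJ, Finset.mem_Ioo]
    omega
  have hTend : Tendsto (fun n => ∑ i ∈ J n, fourierCoeff (⇑G) i • fourier i) atTop (𝓝 G) :=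
    hHasSum.comp (tendsto_atTop_finset_of_monotone hJmono hJcover)
  have hEval : ∀ (n : ℕ) (θ : ℝ), (∑ i ∈ J n, fourierCoeff (⇑G) i • fourier i)
        ((θ:ℝ) : AddCircle (2*π))
      = ((∑ k ∈ Finset.range n, a k * (Chebyshev.T ℝ (k:ℤ)).eval (Real.cos θ) : ℝ) : ℂ) := by
    intro n θ
    induction n with
    | zero => simp [hJ]
    | succ n ih =>
      rcases Nat.eq_zero_or_pos n with h0 | hpos
      · subst h0
        have hJ1 : J 1 = {0} := by
          ext i
          simp only [hJ, Finset.mem_Ioo, Finset.mem_singleton]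
          omega
        rw [hJ1, Finset.sum_singleton, Finset.sum_range_one]
        rw [ContinuousMap.smul_apply, fourier_zero, smul_eq_mul, mul_one]
        rw [← hcdef, hck 0, ← ha0']
        rw [show (Chebyshev.T ℝ ((0:ℕ):ℤ)) = 1 from Polynomial.Chebyshev.T_zero ℝ]
        norm_num
      · have hJsucc : J (n+1) = insert ((n:ℕ):ℤ) (insert (-((n:ℕ):ℤ)) (J n)) := by
          ext i
          simp only [hJ, Finset.mem_Ioo, Finset.mem_insert]
          push_cast
          omega
        have hn0 : ((n:ℕ):ℤ) ∉ insert (-((n:ℕ):ℤ)) (J n) := by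
          simp only [hJ, Finset.mem_insert, Finset.mem_Ioo]
          omega
        have hn1 : (-((n:ℕ):ℤ)) ∉ J n := by
          simp only [hJ, Finset.mem_Ioo]
          omega
        rw [hJsucc, Finset.sum_insert hn0, Finset.sum_insert hn1]
        rw [ContinuousMap.add_apply, ContinuousMap.add_apply, ih, Finset.sum_range_succ]
        have hterm : fourierCoeff (⇑G) ((n:ℕ):ℤ) • (fourier ((n:ℕ):ℤ))
              ((θ:ℝ) : AddCircle (2*π))
            + fourierCoeff (⇑G) (-((n:ℕ):ℤ)) • (fourier (-((n:ℕ):ℤ)))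
              ((θ:ℝ) : AddCircle (2*π))
            = ((a n * (Chebyshev.T ℝ ((n:ℕ):ℤ)).eval (Real.cos θ) : ℝ) : ℂ) := by
          simp only [← hcdef]
          rw [heven ((n:ℕ):ℤ)]
          rw [fourier_two_pi, fourier_two_pi, hck ((n:ℕ):ℤ)]
          rw [Polynomial.Chebyshev.T_real_cos]
          rw [hak' n hpos, smul_eq_mul, smul_eq_mul]
          push_cast
          rw [Complex.cos]
          ring_nf
        rw [ContinuousMap.smul_apply, ContinuousMap.smul_apply, ← add_assoc, hterm]
        push_cast
        ring
  -- put it together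
  rw [Metric.tendstoUniformlyOn_iff]
  intro ε hε
  have hdist := Metric.tendsto_nhds.mp hTend ε hε
  filter_upwards [hdist] with n hn x hx
  have hx1 : Real.cos (Real.arccos x) = x := Real.cos_arccos hx.1 hx.2
  set θ := Real.arccos x with hθ
  set S : ℝ := ∑ k ∈ Finset.range n, a k * (Chebyshev.T ℝ (k:ℤ)).eval x with hS
  have hSx : ((S : ℝ) : ℂ) = (∑ i ∈ J n, fourierCoeff (⇑G) i • fourier i)
      ((θ:ℝ) : AddCircle (2*π)) := by
    rw [hEval n θ, hS, hx1]
  have hfx : ((f x : ℝ) : ℂ) = G ((θ:ℝ) : AddCircle (2*π)) := by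
    rw [hG θ, hfc]
    simp only
    rw [hx1]
  have key : dist (f x) S = ‖G ((θ:ℝ) : AddCircle (2*π))
      - (∑ i ∈ J n, fourierCoeff (⇑G) i • fourier i) ((θ:ℝ) : AddCircle (2*π))‖ := by
    rw [← hfx, ← hSx, Real.dist_eq, ← Complex.ofReal_sub, Complex.norm_real, Real.norm_eq_abs]
  rw [key]
  calc ‖G ((θ:ℝ) : AddCircle (2*π))
      - (∑ i ∈ J n, fourierCoeff (⇑G) i • fourier i) ((θ:ℝ) : AddCircle (2*π))‖
      = ‖((G - ∑ i ∈ J n, fourierCoeff (⇑G) i • fourier i : C(AddCircle (2*π), ℂ)))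
          ((θ:ℝ) : AddCircle (2*π))‖ := by
        rw [ContinuousMap.sub_apply]
    _ ≤ ‖G - ∑ i ∈ J n, fourierCoeff (⇑G) i • fourier i‖ :=
        ContinuousMap.norm_coe_le_norm _ _
    _ = dist (∑ i ∈ J n, fourierCoeff (⇑G) i • fourier i) G := by
        rw [dist_eq_norm, ← norm_neg]
        congr 1
        abel
    _ < ε := hn
end

section
/- Uniqueness of Chebyshev series: if (a_k) and (b_k) are real sequences with ∑_{k=0}^∞ |a_k| < ∞ and ∑_{k=0}^∞ |b_k| < ∞, and ∑_{k=0}^∞ a_k T_k(x) = ∑_{k=0}^∞ b_k T_k(x) for every x ∈ [-1,1], then a_k = b_k for every k ≥ 0. -/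
/-!
Substituting `x = cos θ` turns a Chebyshev series into the cosine series `∑ c k * cos (k θ)`.
The functions `cos (k θ)` are orthogonal on `[0, π]`, and absolute summability allows integrating
the series termwise against `cos (n θ)`, which isolates the coefficient `c n`.
-/

open Polynomial Real

theorem integral_cos_intCast_mul (m : ℤ) :
    ∫ θ in (0)..π, cos (m * θ) = if m = 0 then π else 0 := by
  rcases eq_or_ne m 0 with rfl | hm
  · simp
  · rw [if_neg hm, intervalIntegral.integral_comp_mul_left cos (Int.cast_ne_zero.mpr hm)]
    simp [integral_cos, sin_int_mul_pi]

theorem integral_cos_mul_cos (k n : ℤ) :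
    ∫ θ in (0)..π, cos (k * θ) * cos (n * θ) =
      ((if k = n then π else 0) + if k = -n then π else 0) / 2 := by
  have product_to_sum : ∀ θ : ℝ, cos (k * θ) * cos (n * θ) =
      (cos (((k - n : ℤ) : ℝ) * θ) + cos (((k + n : ℤ) : ℝ) * θ)) / 2 := by
    intro θ
    push_cast
    rw [sub_mul, add_mul, cos_sub, cos_add]
    ring
  have hcont (m : ℤ) : Continuous fun θ : ℝ => cos (m * θ) := by fun_prop
  simp_rw [product_to_sum, intervalIntegral.integral_div]
  rw [intervalIntegral.integral_add ((hcont _).intervalIntegrable _ _)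
    ((hcont _).intervalIntegrable _ _), integral_cos_intCast_mul, integral_cos_intCast_mul]
  simp only [sub_eq_zero, add_eq_zero_iff_eq_neg]

theorem integral_cos_mul_cos_of_ne {k n : ℕ} (h : k ≠ n) :
    ∫ θ in (0)..π, cos (k * θ) * cos (n * θ) = 0 := by
  have := integral_cos_mul_cos k n
  push_cast at this
  rw [this, if_neg (by exact_mod_cast h), if_neg (by omega)]
  simp

theorem integral_cos_mul_cos_self_pos (n : ℕ) :
    0 < ∫ θ in (0)..π, cos (n * θ) * cos (n * θ) := by
  have := integral_cos_mul_cos n n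
  push_cast at this
  rw [this, if_pos rfl]
  split_ifs <;> linarith [pi_pos]

theorem Summable.mul_cos {c : ℕ → ℝ} (hc : Summable c) (θ : ℝ) :
    Summable fun k : ℕ => c k * cos (k * θ) :=
  hc.norm.of_norm_bounded fun k => by
    simpa [abs_mul] using mul_le_of_le_one_right (abs_nonneg (c k)) (abs_cos_le_one (k * θ))

theorem integral_tsum_mul_cos_mul_cos {c : ℕ → ℝ} (hc : Summable c) (n : ℕ) :
    ∫ θ in (0)..π, (∑' k, c k * cos (k * θ)) * cos (n * θ) =
      c n * ∫ θ in (0)..π, cos (n * θ) * cos (n * θ) := by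
  have termwise : HasSum (fun k => ∫ θ in (0)..π, c k * (cos (k * θ) * cos (n * θ)))
      (∫ θ in (0)..π, (∑' k, c k * cos (k * θ)) * cos (n * θ)) := by
    refine intervalIntegral.hasSum_integral_of_dominated_convergence (fun k _ => |c k|)
      (fun k => by fun_prop) (fun k => .of_forall fun θ _ => ?_)
      (.of_forall fun _ _ => hc.abs) intervalIntegrable_const
      (.of_forall fun θ _ => ?_)
    · rw [norm_mul, norm_mul, Real.norm_eq_abs]
      exact mul_le_of_le_one_right (abs_nonneg _)
        (mul_le_one₀ (abs_cos_le_one _) (norm_nonneg _) (abs_cos_le_one _))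
    · simpa only [mul_assoc] using ((hc.mul_cos θ).hasSum.mul_right (cos (n * θ)))
  refine termwise.unique (hasSum_single n fun k hk => ?_) |>.trans ?_
  · rw [intervalIntegral.integral_const_mul, integral_cos_mul_cos_of_ne hk, mul_zero]
  · exact intervalIntegral.integral_const_mul _ _

theorem eq_of_tsum_mul_cos_eq {a b : ℕ → ℝ} (ha : Summable a) (hb : Summable b)
    (h : ∀ θ, ∑' k, a k * cos (k * θ) = ∑' k, b k * cos (k * θ)) : a = b := by
  funext n
  refine mul_right_cancel₀ (integral_cos_mul_cos_self_pos n).ne' ?_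
  rw [← integral_tsum_mul_cos_mul_cos ha, ← integral_tsum_mul_cos_mul_cos hb]
  simp_rw [h]

/-- **Uniqueness of Chebyshev series.** If two absolutely summable coefficient sequences
give the same Chebyshev series on `[-1,1]`, the coefficients agree. -/
theorem chebyshev_series_unique
    (a b : ℕ → ℝ)
    (ha : Summable (fun k : ℕ => |a k|))
    (hb : Summable (fun k : ℕ => |b k|))
    (h : ∀ x ∈ Set.Icc (-1 : ℝ) 1,
      (∑' k : ℕ, a k * (Chebyshev.T ℝ (k : ℤ)).eval x) =
        ∑' k : ℕ, b k * (Chebyshev.T ℝ (k : ℤ)).eval x) :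
    ∀ k : ℕ, a k = b k := by
  refine congrFun (eq_of_tsum_mul_cos_eq ha.of_abs hb.of_abs fun θ => ?_)
  simpa [Chebyshev.T_real_cos] using h (cos θ) ⟨neg_one_le_cos θ, cos_le_one θ⟩
end

section
/- Exact area under a smoothed 2D indicator of the unit disk: for every s > 0, the function (x,y) ↦ ½(1 + tanh(s(1 - x² - y²))) is integrable over ℝ², and ∫_{ℝ²} ½(1 + tanh(s(1 - x² - y²))) dx dy = π·(1 + ln(1 + e^{-2s})/(2s)). -/
/-!
Since `‖(x, y)‖²` in the Euclidean sense is `x² + y²`, polar coordinates turn the integral into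
`2π ∫₀^∞ r (1 + tanh (s (1 - r²))) / 2 dr`. The identity `(1 + tanh u) / 2 = e^{2u} / (1 + e^{2u})`
exhibits the radial integrand as the derivative of `-log (1 + e^{2s(1 - r²)}) / (4s)`, which tends
to `0` at infinity, so the radial integral is `log (1 + e^{2s}) / (4s) = 1/2 + log (1 + e^{-2s}) / (4s)`.
-/

open Real MeasureTheory

open Set Filter Topology

theorem one_add_tanh_div_two (u : ℝ) : (1 + tanh u) / 2 = exp (2 * u) / (1 + exp (2 * u)) := by
  rw [tanh_eq_sinh_div_cosh, sinh_eq, cosh_eq, two_mul, exp_add, exp_neg]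
  field_simp
  ring

theorem log_one_add_exp (v : ℝ) : log (1 + exp v) = v + log (1 + exp (-v)) := by
  have : 1 + exp v = exp v * (1 + exp (-v)) := by
    rw [mul_add, ← exp_add, add_neg_cancel, exp_zero, mul_one, add_comm]
  rw [this, log_mul (exp_ne_zero v) (by positivity), log_exp]

section Radial

variable {E : Type*} [NormedAddCommGroup E] [NormedSpace ℝ E]

/- `ℝ × ℝ` carries the sup norm, so radial integration is done on `ℂ`, whose norm is Euclidean. -/
theorem Complex.measurableEquivRealProd_fst_sq_add_snd_sq (z : ℂ) :
    (Complex.measurableEquivRealProd z).1 ^ 2 + (Complex.measurableEquivRealProd z).2 ^ 2 =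
      ‖z‖ ^ 2 := by
  rw [Complex.sq_norm, Complex.normSq_apply, sq, sq]
  rfl

theorem integrable_fun_sq_add_sq_iff {h : ℝ → E} :
    Integrable (fun p : ℝ × ℝ => h (p.1 ^ 2 + p.2 ^ 2)) ↔
      IntegrableOn (fun r : ℝ => r • h (r ^ 2)) (Ioi 0) := by
  rw [← Complex.volume_preserving_equiv_real_prod.integrable_comp_emb
    Complex.measurableEquivRealProd.measurableEmbedding, Function.comp_def]
  simp_rw [Complex.measurableEquivRealProd_fst_sq_add_snd_sq]
  rw [integrable_fun_norm_addHaar volume (f := fun r => h (r ^ 2))]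
  simp [Complex.finrank_real_complex]

theorem integral_fun_sq_add_sq (h : ℝ → E) :
    ∫ p : ℝ × ℝ, h (p.1 ^ 2 + p.2 ^ 2) = (2 * π) • ∫ r in Ioi (0 : ℝ), r • h (r ^ 2) := by
  rw [← Complex.volume_preserving_equiv_real_prod.integral_comp']
  simp_rw [Complex.measurableEquivRealProd_fst_sq_add_snd_sq]
  rw [integral_fun_norm_addHaar volume (fun r => h (r ^ 2))]
  simp [Complex.finrank_real_complex, measureReal_def, ← smul_assoc, nsmul_eq_mul]

end Radial

section SmoothedDiskProfile

variable {s : ℝ}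

noncomputable def smoothedDiskRadialPrimitive (s r : ℝ) : ℝ :=
  -(log (1 + exp (2 * (s * (1 - r ^ 2)))) / (4 * s))

theorem hasDerivAt_smoothedDiskRadialPrimitive (hs : s ≠ 0) (r : ℝ) :
    HasDerivAt (smoothedDiskRadialPrimitive s) (r * ((1 + tanh (s * (1 - r ^ 2))) / 2)) r := by
  have hw : HasDerivAt (fun r : ℝ => 2 * (s * (1 - r ^ 2))) (2 * (s * -(2 * r))) r := by
    simpa using (((hasDerivAt_pow 2 r).const_sub 1).const_mul s).const_mul 2
  have hlog := ((hw.exp.const_add 1).log (by positivity)).div_const (4 * s)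
  refine hlog.neg.congr_deriv ?_
  rw [one_add_tanh_div_two]
  field_simp
  ring

theorem tendsto_smoothedDiskRadialPrimitive_atTop (hs : 0 < s) :
    Tendsto (smoothedDiskRadialPrimitive s) atTop (𝓝 0) := by
  have hw : Tendsto (fun r : ℝ => 2 * (s * (1 - r ^ 2))) atTop atBot := by
    refine (tendsto_const_mul_atBot_of_pos two_pos).2 ((tendsto_const_mul_atBot_of_pos hs).2 ?_)
    exact tendsto_atBot_add_const_left _ 1
      (tendsto_neg_atTop_atBot.comp (tendsto_pow_atTop two_ne_zero))
  have hexp : Tendsto (fun r => 1 + exp (2 * (s * (1 - r ^ 2)))) atTop (𝓝 1) := by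
    simpa using (tendsto_exp_atBot.comp hw).const_add 1
  unfold smoothedDiskRadialPrimitive
  simpa using (((continuousAt_log one_ne_zero).tendsto.comp hexp).div_const (4 * s)).neg

theorem integrableOn_Ioi_mul_one_add_tanh (hs : 0 < s) :
    IntegrableOn (fun r : ℝ => r * ((1 + tanh (s * (1 - r ^ 2))) / 2)) (Ioi 0) :=
  integrableOn_Ioi_deriv_of_nonneg' (fun r _ => hasDerivAt_smoothedDiskRadialPrimitive hs.ne' r)
    (fun r hr => mul_nonneg hr.out.le (by linarith [neg_one_lt_tanh (s * (1 - r ^ 2))]))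
    (tendsto_smoothedDiskRadialPrimitive_atTop hs)

theorem integral_Ioi_mul_one_add_tanh (hs : 0 < s) :
    ∫ r in Ioi (0 : ℝ), r * ((1 + tanh (s * (1 - r ^ 2))) / 2) =
      log (1 + exp (2 * s)) / (4 * s) := by
  rw [integral_Ioi_of_hasDerivAt_of_tendsto'
    (fun r _ => hasDerivAt_smoothedDiskRadialPrimitive hs.ne' r)
    (integrableOn_Ioi_mul_one_add_tanh hs) (tendsto_smoothedDiskRadialPrimitive_atTop hs)]
  simp [smoothedDiskRadialPrimitive]

end SmoothedDiskProfile

/-- **Exact area under a smoothed 2D indicator of the unit disk.** For every slope `s > 0`,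
the smoothed indicator `½(1 + tanh(s(1 - x² - y²)))` is integrable on `ℝ²` and its integral
equals `π (1 + ln(1 + e^{-2s})/(2s))`. -/
theorem integral_smoothed_disk_indicator (s : ℝ) (hs : 0 < s) :
    Integrable (fun p : ℝ × ℝ =>
        (1 + Real.tanh (s * (1 - p.1 ^ 2 - p.2 ^ 2))) / 2) volume ∧
      (∫ p : ℝ × ℝ, (1 + Real.tanh (s * (1 - p.1 ^ 2 - p.2 ^ 2))) / 2) =
        π * (1 + Real.log (1 + Real.exp (-2 * s)) / (2 * s)) := by
  set profile : ℝ → ℝ := fun t => (1 + tanh (s * (1 - t))) / 2 with hprofile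
  have hradial : (fun p : ℝ × ℝ => (1 + tanh (s * (1 - p.1 ^ 2 - p.2 ^ 2))) / 2) =
      fun p => profile (p.1 ^ 2 + p.2 ^ 2) := by
    simp only [hprofile, sub_sub]
  rw [hradial, integrable_fun_sq_add_sq_iff, integral_fun_sq_add_sq]
  simp only [hprofile, smul_eq_mul]
  refine ⟨integrableOn_Ioi_mul_one_add_tanh hs, ?_⟩
  rw [integral_Ioi_mul_one_add_tanh hs, log_one_add_exp, neg_mul]
  field_simp
  ring
end
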